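/- Let G be a finite abelian group with D(G) ≥ 4 and let G0 ⊆ G be a subset with Δ(G0) ≠ ∅ and min Δ(G0) ≥ ⌊exp(G)/2⌋. If A ∈ A(G0) satisfies k(A) < 1, then k(A) = (exp(G) − min Δ(G0))/exp(G), and every h ∈ supp(A) satisfies ord(h) = exp(G) and v_h(A) = 1. -/

import Mathlib

/- Common definitions: zero-sum sequences over a finite abelian group,
   sets of lengths, the system of sets of lengths, the Davenport constant,
   sets of distances, elasticities, AAPs, Δ₁(G), ρ(G,d,k), ρ(G,d), ρ*(G,d),
   cross numbers, K(G₀), K(G,d), LCN-sets, Δ*(G). -/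

open scoped Classical

section Defs

variable {G : Type*} [AddCommGroup G]

/-- The support of a sequence (multiset) over `G`. -/
def suppSet (A : Multiset G) : Set G := {g | g ∈ A}

/-- `A` is a minimal zero-sum sequence (an atom of `𝓑(G₀)`) over `G₀ ⊆ G`:
a nontrivial zero-sum sequence with terms in `G₀` such that every proper
nontrivial subsequence has nonzero sum. -/
def IsMinZeroSum (G0 : Set G) (A : Multiset G) : Prop :=
  A ≠ 0 ∧ (∀ g ∈ A, g ∈ G0) ∧ A.sum = 0 ∧
    ∀ T : Multiset G, T ≤ A → T.sum = 0 → T = 0 ∨ T = A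

/-- `B` is a zero-sum sequence over `G₀ ⊆ G` (an element of `𝓑(G₀)`). -/
def IsZeroSumSeq (G0 : Set G) (B : Multiset G) : Prop :=
  (∀ g ∈ B, g ∈ G0) ∧ B.sum = 0

/-- The set of lengths `L(B)` of a zero-sum sequence `B` over `G₀`:
all `k` such that `B` is a product of `k` atoms of `𝓑(G₀)`.
(For the trivial sequence this is `{0}`.) -/
def lengthSet (G0 : Set G) (B : Multiset G) : Set ℕ :=
  {k | ∃ U : Fin k → Multiset G, (∀ i, IsMinZeroSum G0 (U i)) ∧ B = ∑ i, U i}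

/-- The system of sets of lengths `𝓛(G₀)`. -/
def systemL (G0 : Set G) : Set (Set ℕ) :=
  {L | ∃ B : Multiset G, IsZeroSumSeq G0 B ∧ L = lengthSet G0 B}

/-- The Davenport constant `D(G)`: the maximal length of a minimal zero-sum
sequence over `G`. -/
noncomputable def davenport (G : Type*) [AddCommGroup G] : ℕ :=
  sSup {m | ∃ A : Multiset G, IsMinZeroSum (Set.univ : Set G) A ∧ Multiset.card A = m}

/-- The set of successive distances `Δ(L)` of a set `L ⊆ ℕ`. -/
def deltaOf (L : Set ℕ) : Set ℕ :=
  {d | 0 < d ∧ ∃ a, a ∈ L ∧ a + d ∈ L ∧ ∀ c ∈ L, ¬(a < c ∧ c < a + d)}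

/-- `Δ(G₀) = ⋃_{L ∈ 𝓛(G₀)} Δ(L)`. -/
def deltaG0 (G0 : Set G) : Set ℕ := ⋃ L ∈ systemL G0, deltaOf L

/-- `Δ*(G) = {min Δ(G₀) : G₀ ⊆ G with Δ(G₀) ≠ ∅}`. -/
def deltaStar (G : Type*) [AddCommGroup G] : Set ℕ :=
  {d | ∃ G0 : Set G, deltaG0 G0 ≠ ∅ ∧ d = sInf (deltaG0 G0)}

/-- The elasticity `ρ(L) = max L / min L` of a (finite) set `L ⊆ ℕ`,
with the convention `ρ({0}) = 1`. -/
noncomputable def rhoL (L : Set ℕ) : ℝ :=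
  if sInf L = 0 then 1 else ((sSup L : ℕ) : ℝ) / ((sInf L : ℕ) : ℝ)

/-- The elasticity `ρ(G₀) = sup {ρ(L) : L ∈ 𝓛(G₀)}`. -/
noncomputable def rhoG0 (G0 : Set G) : ℝ := sSup (rhoL '' systemL G0)

/-- `L` (a set of naturals) is an almost arithmetical progression (AAP)
with difference `d`, length `ℓ` and bound `M`:
`L = y + (L' ∪ {0, d, …, ℓd} ∪ L'') ⊆ y + dℤ` with `L' ⊆ [−M, −1]` and
`L'' ⊆ ℓd + [1, M]`. -/
def IsAAP (L : Set ℕ) (d ℓ M : ℕ) : Prop :=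
  ∃ (y : ℤ) (L1 L2 : Set ℤ),
    L1 ⊆ Set.Icc (-(M : ℤ)) (-1) ∧
    L2 ⊆ Set.Icc ((ℓ : ℤ) * d + 1) ((ℓ : ℤ) * d + M) ∧
    ((fun x : ℕ => (x : ℤ)) '' L) =
      (fun x => y + x) '' (L1 ∪ (fun i : ℤ => (d : ℤ) * i) '' Set.Icc (0 : ℤ) (ℓ : ℤ) ∪ L2) ∧
    (∀ x ∈ L, (d : ℤ) ∣ ((x : ℤ) - y))

/-- `Δ₁(G)`: the set of `d ∈ ℕ` such that for every `k` there is some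
`L ∈ 𝓛(G)` which is an AAP with difference `d` and length at least `k`. -/
def delta1 (G : Type*) [AddCommGroup G] : Set ℕ :=
  {d | 0 < d ∧ ∀ k : ℕ, ∃ L ∈ systemL (Set.univ : Set G), ∃ ℓ ≥ k, ∃ M : ℕ, IsAAP L d ℓ M}

/-- `ρ(G, d, k)`: the supremum of elasticities of sets of lengths of `G` which
are AAPs with difference `d` and length at least `k`. -/
noncomputable def rhoGdk (G : Type*) [AddCommGroup G] (d k : ℕ) : ℝ :=
  sSup (rhoL '' {L | L ∈ systemL (Set.univ : Set G) ∧ ∃ ℓ ≥ k, ∃ M : ℕ, IsAAP L d ℓ M})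

/-- `ρ(G, d)`: the limit of the decreasing sequence `(ρ(G, d, k))_k`,
i.e. its infimum. -/
noncomputable def rhoGd (G : Type*) [AddCommGroup G] (d : ℕ) : ℝ :=
  ⨅ k : ℕ, rhoGdk G d k

/-- `ρ*(G, d) = max {ρ(G₀) : G₀ ⊆ G non-half-factorial with d ∣ min Δ(G₀)}`. -/
noncomputable def rhoStar (G : Type*) [AddCommGroup G] (d : ℕ) : ℝ :=
  sSup {x | ∃ G0 : Set G, deltaG0 G0 ≠ ∅ ∧ d ∣ sInf (deltaG0 G0) ∧ x = rhoG0 G0}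

/-- The cross number `k(S) = Σ_{g ∈ S} 1/ord(g)` of a sequence `S`. -/
noncomputable def crossNum (S : Multiset G) : ℝ :=
  (S.map (fun g => (1 : ℝ) / (addOrderOf g))).sum

/-- `K(G₀) = max {k(A) : A ∈ 𝓐(G₀)}`, the cross number of `G₀`. -/
noncomputable def KG0 (G0 : Set G) : ℝ :=
  sSup {x | ∃ A : Multiset G, IsMinZeroSum G0 A ∧ x = crossNum A}

/-- `K(G, d) = max {K(G₀) : G₀ ⊆ G non-half-factorial with d ∣ min Δ(G₀)}`. -/
noncomputable def KGd (G : Type*) [AddCommGroup G] (d : ℕ) : ℝ :=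
  sSup {x | ∃ G0 : Set G, deltaG0 G0 ≠ ∅ ∧ d ∣ sInf (deltaG0 G0) ∧ x = KG0 G0}

/-- `G₀` is an LCN-set: `k(A) ≥ 1` for every atom `A` of `𝓑(G₀)`. -/
def IsLCN (G0 : Set G) : Prop :=
  ∀ A : Multiset G, IsMinZeroSum G0 A → 1 ≤ crossNum A

end Defs


/-!
Write `n = exp(G)` and `d = min Δ(G₀)`, so that `n ≤ 2d + 1`. Two distinct lengths of a zero-sum
sequence differ by at least `d`, and an element of `Δ(G₀)` below `2d` equals `d`, since otherwise
the product of the two witnessing sequences has two lengths closer than `d`.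

For an atom `A` with `k(A) < 1`, the sequence `A^n` factors as `A·…·A` (length `n`) and into the
atoms `g^{ord g}` (length `K = n·k(A)`), where `2 ≤ |A| ≤ K < n`. These two lengths are less than
`2d` apart, so `n - K = d`, which is the formula for `k(A)`; in particular every atom has cross
number at least `(n - d)/n`.

If `h ∈ supp(A)` had `ord(h) < n` or `v_h(A) ≥ 2`, put `j = ord(h)`, resp. `j = ⌈n/2⌉`, so that
`h^{ord h}` divides `A^j`. Then `A^j = h^{ord h}·S` with `S` a nontrivial product of `t` atoms, and
comparing cross numbers gives `1 + t < j`. Hence `j ≥ 1 + t + d ≥ d + 2 > n/2`, contradicting the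
choice of `j`.
-/

open Multiset

lemma Nat.two_mul_le_of_dvd_of_ne {m n : ℕ} (hn : n ≠ 0) (hdvd : m ∣ n) (hne : m ≠ n) :
    2 * m ≤ n := by
  obtain ⟨c, rfl⟩ := hdvd
  have hc0 : c ≠ 0 := by rintro rfl; simp at hn
  have hc1 : c ≠ 1 := by rintro rfl; simp at hne
  rw [mul_comm]
  exact Nat.mul_le_mul_left _ (by omega)

section CrossNumber

variable {G : Type*} [AddCommGroup G]

lemma crossNum_add (S T : Multiset G) : crossNum (S + T) = crossNum S + crossNum T := by
  simp [crossNum]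

lemma crossNum_nsmul (j : ℕ) (S : Multiset G) : crossNum (j • S) = j * crossNum S := by
  simp [crossNum, Multiset.map_nsmul, Multiset.sum_nsmul]

lemma crossNum_sum {ι : Type*} (s : Finset ι) (f : ι → Multiset G) :
    crossNum (∑ i ∈ s, f i) = ∑ i ∈ s, crossNum (f i) :=
  map_sum (AddMonoidHom.mk' crossNum crossNum_add) f s

lemma crossNum_replicate_addOrderOf {g : G} (hg : IsOfFinAddOrder g) :
    crossNum (replicate (addOrderOf g) g) = 1 := by
  have : (addOrderOf g : ℝ) ≠ 0 := by exact_mod_cast hg.addOrderOf_pos.ne'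
  simp [crossNum, this]

lemma card_le_exponent_mul_crossNum [Finite G] (S : Multiset G) :
    (card S : ℝ) ≤ AddMonoid.exponent G * crossNum S := by
  have hn : (0 : ℝ) < AddMonoid.exponent G := by
    exact_mod_cast Nat.pos_of_ne_zero AddMonoid.exponent_ne_zero_of_finite
  have hterm : ∀ g : G, 1 / (AddMonoid.exponent G : ℝ) ≤ 1 / addOrderOf g := fun g =>
    one_div_le_one_div_of_le (by exact_mod_cast addOrderOf_pos g)
      (by exact_mod_cast Nat.le_of_dvd (by exact_mod_cast hn) (AddMonoid.addOrder_dvd_exponent g))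
  have hsum : card S • (1 / (AddMonoid.exponent G : ℝ)) ≤ crossNum S := by
    simpa [crossNum] using Multiset.card_nsmul_le_sum (s := S.map fun g => 1 / (addOrderOf g : ℝ))
      (by simpa using fun g _ => hterm g)
  rw [nsmul_eq_mul] at hsum
  rwa [mul_one_div, div_le_iff₀ hn, mul_comm] at hsum

end CrossNumber

section Factorizations

variable {G : Type*} [AddCommGroup G] {G0 : Set G}

lemma IsZeroSumSeq.add {B C : Multiset G} (hB : IsZeroSumSeq G0 B) (hC : IsZeroSumSeq G0 C) :
    IsZeroSumSeq G0 (B + C) :=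
  ⟨fun g hg => (mem_add.mp hg).elim (hB.1 g) (hC.1 g), by simp [hB.2, hC.2]⟩

lemma IsZeroSumSeq.nsmul {B : Multiset G} (hB : IsZeroSumSeq G0 B) (j : ℕ) :
    IsZeroSumSeq G0 (j • B) :=
  ⟨fun g hg => hB.1 g (mem_of_mem_nsmul hg), by simp [Multiset.sum_nsmul, hB.2]⟩

lemma IsMinZeroSum.isZeroSumSeq {A : Multiset G} (hA : IsMinZeroSum G0 A) :
    IsZeroSumSeq G0 A :=
  ⟨hA.2.1, hA.2.2.1⟩

lemma isMinZeroSum_replicate_addOrderOf {g : G} (hg : g ∈ G0) (hfin : IsOfFinAddOrder g) :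
    IsMinZeroSum G0 (replicate (addOrderOf g) g) := by
  refine ⟨by rw [Ne, ← card_eq_zero, card_replicate]; exact hfin.addOrderOf_pos.ne',
    fun x hx => eq_of_mem_replicate hx ▸ hg, by simp, fun T hT hTsum => ?_⟩
  obtain ⟨c, hc, rfl⟩ := (le_replicate_iff ..).mp hT
  rw [sum_replicate] at hTsum
  rcases hc.lt_or_eq with hlt | rfl
  · exact .inl (by rw [Nat.eq_zero_of_dvd_of_lt (addOrderOf_dvd_of_nsmul_eq_zero hTsum) hlt,
      replicate_zero])
  · exact .inr rfl

lemma IsMinZeroSum.crossNum_eq_one_of_forall_eq [Finite G] {A : Multiset G}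
    (hA : IsMinZeroSum G0 A) {h : G} (h_all : ∀ g ∈ A, g = h) : crossNum A = 1 := by
  obtain ⟨hA0, -, hAsum, hAmin⟩ := hA
  have hrep : A = replicate (card A) h := eq_replicate_of_mem h_all
  have hdvd : addOrderOf h ∣ card A :=
    addOrderOf_dvd_of_nsmul_eq_zero (by rw [← sum_replicate, ← hrep, hAsum])
  have hle : replicate (addOrderOf h) h ≤ A := by
    rw [hrep]
    exact (replicate_le_replicate h).mpr (Nat.le_of_dvd (card_pos.mpr hA0) hdvd)
  rcases hAmin _ hle (by simp) with h0 | hAeq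
  · simpa [(isOfFinAddOrder_of_finite h).addOrderOf_pos.ne'] using congrArg card h0
  · rw [← hAeq, crossNum_replicate_addOrderOf (isOfFinAddOrder_of_finite h)]

lemma IsMinZeroSum.exists_ne_of_crossNum_lt_one [Finite G] {A : Multiset G}
    (hA : IsMinZeroSum G0 A) (hk : crossNum A < 1) (h : G) : ∃ g ∈ A, g ≠ h := by
  by_contra! h_all
  exact hk.ne (hA.crossNum_eq_one_of_forall_eq h_all)

lemma IsMinZeroSum.two_le_card_of_crossNum_lt_one [Finite G] {A : Multiset G}
    (hA : IsMinZeroSum G0 A) (hk : crossNum A < 1) : 2 ≤ card A := by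
  by_contra! hcard
  interval_cases hc : card A
  · exact hA.1 (card_eq_zero.mp hc)
  · obtain ⟨x, rfl⟩ := card_eq_one.mp hc
    obtain ⟨g, hg, hgx⟩ := hA.exists_ne_of_crossNum_lt_one hk x
    exact hgx (mem_singleton.mp hg)

lemma zero_mem_lengthSet_zero : 0 ∈ lengthSet G0 0 :=
  ⟨finZeroElim, finZeroElim, by simp⟩

lemma IsMinZeroSum.one_mem_lengthSet {U : Multiset G} (hU : IsMinZeroSum G0 U) :
    1 ∈ lengthSet G0 U :=
  ⟨fun _ => U, fun _ => hU, by simp⟩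

lemma add_mem_lengthSet {B C : Multiset G} {x y : ℕ}
    (hx : x ∈ lengthSet G0 B) (hy : y ∈ lengthSet G0 C) : x + y ∈ lengthSet G0 (B + C) := by
  obtain ⟨U, hU, rfl⟩ := hx
  obtain ⟨V, hV, rfl⟩ := hy
  refine ⟨Fin.addCases U V, Fin.addCases (by simpa using hU) (by simpa using hV), ?_⟩
  simp [Fin.sum_univ_add]

lemma IsMinZeroSum.nsmul_mem_lengthSet {A : Multiset G} (hA : IsMinZeroSum G0 A) (j : ℕ) :
    j ∈ lengthSet G0 (j • A) :=
  ⟨fun _ => A, fun _ => hA, by simp⟩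

lemma pos_of_mem_lengthSet {S : Multiset G} (hS : S ≠ 0) {k : ℕ} (hk : k ∈ lengthSet G0 S) :
    0 < k := by
  obtain ⟨U, -, rfl⟩ := hk
  rcases Nat.eq_zero_or_pos k with rfl | hpos
  · simp at hS
  · exact hpos

lemma IsZeroSumSeq.exists_mem_lengthSet {S : Multiset G} (hS : IsZeroSumSeq G0 S) :
    ∃ k, k ∈ lengthSet G0 S := by
  induction S using Multiset.strongInductionOn with
  | ih S ih =>
  by_cases hatom : IsMinZeroSum G0 S
  · exact ⟨1, hatom.one_mem_lengthSet⟩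
  rcases eq_or_ne S 0 with rfl | hS0
  · exact ⟨0, zero_mem_lengthSet_zero⟩
  obtain ⟨T, hTS, hTsum, hT0, hTS'⟩ : ∃ T ≤ S, T.sum = 0 ∧ T ≠ 0 ∧ T ≠ S := by
    simp only [IsMinZeroSum] at hatom
    push Not at hatom
    exact hatom hS0 hS.1 hS.2
  obtain ⟨U, rfl⟩ := Multiset.le_iff_exists_add.mp hTS
  have hU : IsZeroSumSeq G0 U :=
    ⟨fun g hg => hS.1 g (mem_add.mpr (.inr hg)), by simpa [hTsum] using hS.2⟩
  obtain ⟨x, hx⟩ := ih T (lt_of_le_of_ne hTS hTS') ⟨fun g hg => hS.1 g (mem_of_le hTS hg), hTsum⟩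
  obtain ⟨y, hy⟩ := ih U (lt_add_of_pos_left U (pos_iff_ne_zero.mpr hT0)) hU
  exact ⟨x + y, add_mem_lengthSet hx hy⟩

lemma exists_mem_lengthSet_exponent_nsmul [Finite G] {U : Multiset G} (hU : ∀ g ∈ U, g ∈ G0) :
    ∃ K ∈ lengthSet G0 (AddMonoid.exponent G • U), (K : ℝ) = AddMonoid.exponent G * crossNum U := by
  induction U using Multiset.induction with
  | empty => exact ⟨0, by simpa using zero_mem_lengthSet_zero, by simp [crossNum]⟩
  | cons g U ih =>
  set n := AddMonoid.exponent G
  have hfin : IsOfFinAddOrder g := isOfFinAddOrder_of_finite g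
  have hdvd : addOrderOf g ∣ n := AddMonoid.addOrder_dvd_exponent g
  obtain ⟨K, hK, hKcross⟩ := ih fun x hx => hU x (mem_cons_of_mem hx)
  have hpow : n • {g} = (n / addOrderOf g) • replicate (addOrderOf g) g := by
    rw [nsmul_singleton, nsmul_replicate, Nat.div_mul_cancel hdvd]
  refine ⟨n / addOrderOf g + K, ?_, ?_⟩
  · rw [← singleton_add, nsmul_add, hpow]
    exact add_mem_lengthSet
      ((isMinZeroSum_replicate_addOrderOf (hU g (mem_cons_self g U)) hfin).nsmul_mem_lengthSet _) hK
  · have hord : (addOrderOf g : ℝ) ≠ 0 := by exact_mod_cast hfin.addOrderOf_pos.ne'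
    rw [← singleton_add, crossNum_add, Nat.cast_add, Nat.cast_div hdvd hord, hKcross]
    simp only [crossNum, one_div, map_singleton, sum_singleton]
    ring

lemma mul_le_crossNum_of_mem_lengthSet {c : ℝ} (hc : ∀ V, IsMinZeroSum G0 V → c ≤ crossNum V)
    {S : Multiset G} {t : ℕ} (ht : t ∈ lengthSet G0 S) : t * c ≤ crossNum S := by
  obtain ⟨V, hV, rfl⟩ := ht
  calc (t : ℝ) * c = ∑ _i : Fin t, c := by simp
    _ ≤ ∑ i, crossNum (V i) := Finset.sum_le_sum fun i _ => hc _ (hV i)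
    _ = crossNum (∑ i, V i) := (crossNum_sum _ _).symm

end Factorizations

section Distances

lemma exists_mem_deltaOf_le {L : Set ℕ} {x y : ℕ} (hx : x ∈ L) (hy : y ∈ L) (hxy : x < y) :
    ∃ e ∈ deltaOf L, e ≤ y - x := by
  have hex : ∃ z, x < z ∧ z ∈ L := ⟨y, hxy, hy⟩
  obtain ⟨hxz, hz⟩ := Nat.find_spec hex
  have hzy : Nat.find hex ≤ y := Nat.find_min' hex ⟨hxy, hy⟩
  refine ⟨Nat.find hex - x, ⟨by omega, x, hx, by rwa [Nat.add_sub_cancel' hxz.le], ?_⟩, by omega⟩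
  rintro c hc ⟨hxc, hcz⟩
  exact Nat.find_min hex (by omega) ⟨hxc, hc⟩

variable {G : Type*} [AddCommGroup G] {G0 : Set G}

lemma IsZeroSumSeq.mem_deltaG0 {B : Multiset G} (hB : IsZeroSumSeq G0 B) {e : ℕ}
    (he : e ∈ deltaOf (lengthSet G0 B)) : e ∈ deltaG0 G0 :=
  Set.mem_biUnion ⟨B, hB, rfl⟩ he

lemma IsZeroSumSeq.add_sInf_deltaG0_le {B : Multiset G} (hB : IsZeroSumSeq G0 B) {x y : ℕ}
    (hx : x ∈ lengthSet G0 B) (hy : y ∈ lengthSet G0 B) (hxy : x < y) :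
    x + sInf (deltaG0 G0) ≤ y := by
  obtain ⟨e, he, hey⟩ := exists_mem_deltaOf_le hx hy hxy
  have := Nat.sInf_le (hB.mem_deltaG0 he)
  omega

lemma eq_sInf_deltaG0_of_lt_two_mul {e : ℕ} (he : e ∈ deltaG0 G0)
    (hlt : e < 2 * sInf (deltaG0 G0)) : e = sInf (deltaG0 G0) := by
  set d := sInf (deltaG0 G0)
  have hd : d ∈ deltaG0 G0 := Nat.sInf_mem ⟨e, he⟩
  by_contra hne
  have hde : d < e := lt_of_le_of_ne (Nat.sInf_le he) (Ne.symm hne)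
  simp only [deltaG0, Set.mem_iUnion] at hd he
  obtain ⟨-, ⟨B, hB, rfl⟩, -, a, ha, had, -⟩ := hd
  obtain ⟨-, ⟨C, hC, rfl⟩, -, b, hb, hbe, -⟩ := he
  have := (hB.add hC).add_sInf_deltaG0_le (add_mem_lengthSet had hb) (add_mem_lengthSet ha hbe)
    (by omega)
  omega

lemma IsZeroSumSeq.eq_add_sInf_deltaG0 {B : Multiset G} (hB : IsZeroSumSeq G0 B) {x y : ℕ}
    (hx : x ∈ lengthSet G0 B) (hy : y ∈ lengthSet G0 B) (hxy : x < y)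
    (hlt : y < x + 2 * sInf (deltaG0 G0)) : y = x + sInf (deltaG0 G0) := by
  have hdelta : y - x ∈ deltaOf (lengthSet G0 B) := by
    refine ⟨by omega, x, hx, by rwa [Nat.add_sub_cancel' hxy.le], ?_⟩
    rintro c hc ⟨hxc, hcy⟩
    have := hB.add_sInf_deltaG0_le hx hc hxc
    have := hB.add_sInf_deltaG0_le hc hy (by omega)
    omega
  have := eq_sInf_deltaG0_of_lt_two_mul (hB.mem_deltaG0 hdelta) (by omega)
  omega

end Distances

section CrossNumberOfAtoms

variable {G : Type*} [AddCommGroup G] [Finite G] {G0 : Set G}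

theorem IsMinZeroSum.crossNum_eq_of_crossNum_lt_one
    (hmin : AddMonoid.exponent G / 2 ≤ sInf (deltaG0 G0))
    {A : Multiset G} (hA : IsMinZeroSum G0 A) (hk : crossNum A < 1) :
    crossNum A = ((AddMonoid.exponent G : ℝ) - ((sInf (deltaG0 G0) : ℕ) : ℝ)) /
        (AddMonoid.exponent G : ℝ) ∧ sInf (deltaG0 G0) + 2 ≤ AddMonoid.exponent G := by
  obtain ⟨K, hK, hKcross⟩ := exists_mem_lengthSet_exponent_nsmul hA.2.1
  have hK2 : 2 ≤ K := by
    have hcard : (2 : ℝ) ≤ card A := by exact_mod_cast hA.two_le_card_of_crossNum_lt_one hk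
    exact_mod_cast hKcross ▸ hcard.trans (card_le_exponent_mul_crossNum A)
  set n := AddMonoid.exponent G
  set d := sInf (deltaG0 G0)
  have hn : (0 : ℝ) < n := by exact_mod_cast Nat.pos_of_ne_zero AddMonoid.exponent_ne_zero_of_finite
  have hKn : K < n := by
    exact_mod_cast (show (K : ℝ) < n by rw [hKcross]; nlinarith)
  have hB := hA.isZeroSumSeq.nsmul n
  have hn_mem := hA.nsmul_mem_lengthSet n
  have hgap := hB.add_sInf_deltaG0_le hK hn_mem hKn
  have hnK : n = K + d := hB.eq_add_sInf_deltaG0 hK hn_mem hKn (by omega)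
  refine ⟨?_, by omega⟩
  rw [eq_div_iff hn.ne', mul_comm, ← hKcross, hnK]
  push_cast
  ring

theorem IsMinZeroSum.exponent_sub_div_exponent_le_crossNum
    (hmin : AddMonoid.exponent G / 2 ≤ sInf (deltaG0 G0))
    {V : Multiset G} (hV : IsMinZeroSum G0 V) :
    ((AddMonoid.exponent G : ℝ) - ((sInf (deltaG0 G0) : ℕ) : ℝ)) /
        (AddMonoid.exponent G : ℝ) ≤ crossNum V := by
  rcases lt_or_ge (crossNum V) 1 with hk | hk
  · exact (hV.crossNum_eq_of_crossNum_lt_one hmin hk).1.ge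
  · refine le_trans ?_ hk
    rw [div_le_one (by exact_mod_cast Nat.pos_of_ne_zero AddMonoid.exponent_ne_zero_of_finite)]
    linarith [(Nat.cast_nonneg (sInf (deltaG0 G0)) : (0 : ℝ) ≤ _)]

lemma IsMinZeroSum.exists_nsmul_eq_replicate_add
    {A : Multiset G} (hA : IsMinZeroSum G0 A) (hk : crossNum A < 1) {h : G}
    {j : ℕ} (hj : addOrderOf h ≤ j * A.count h) :
    ∃ S, S ≠ 0 ∧ IsZeroSumSeq G0 S ∧ j • A = replicate (addOrderOf h) h + S := by
  have hj1 : 1 ≤ j := Nat.pos_of_mul_pos_right ((addOrderOf_pos h).trans_le hj)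
  have hle : replicate (addOrderOf h) h ≤ j • A := by
    rw [le_iff_count]
    intro x
    rw [count_nsmul, count_replicate]
    split_ifs with hx
    · exact hx ▸ hj
    · exact Nat.zero_le _
  obtain ⟨S, hS⟩ := Multiset.le_iff_exists_add.mp hle
  have hjA := hA.isZeroSumSeq.nsmul j
  refine ⟨S, ?_, ⟨fun g hg => hjA.1 g (hS ▸ mem_add.mpr (.inr hg)), by simpa [hS] using hjA.2⟩, hS⟩
  obtain ⟨g, hgA, hgh⟩ := hA.exists_ne_of_crossNum_lt_one hk h
  have : g ∈ j • A := mem_nsmul.mpr ⟨by omega, hgA⟩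
  rw [hS, mem_add] at this
  rintro rfl
  exact hgh (eq_of_mem_replicate (by simpa using this))

theorem IsMinZeroSum.sInf_deltaG0_add_two_le
    (hmin : AddMonoid.exponent G / 2 ≤ sInf (deltaG0 G0))
    {A : Multiset G} (hA : IsMinZeroSum G0 A) (hk : crossNum A < 1) {h : G} (hh : h ∈ A)
    {j : ℕ} (hj : addOrderOf h ≤ j * A.count h) : sInf (deltaG0 G0) + 2 ≤ j := by
  obtain ⟨hcross, hdn⟩ := hA.crossNum_eq_of_crossNum_lt_one hmin hk
  set κ := ((AddMonoid.exponent G : ℝ) - ((sInf (deltaG0 G0) : ℕ) : ℝ)) / AddMonoid.exponent G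
  have hn : (0 : ℝ) < AddMonoid.exponent G := by
    exact_mod_cast Nat.pos_of_ne_zero AddMonoid.exponent_ne_zero_of_finite
  have hκ : κ < 1 := by
    rw [div_lt_one hn, sub_lt_self_iff]
    exact_mod_cast (show 0 < sInf (deltaG0 G0) by omega)
  have hκ0 : 0 ≤ κ := div_nonneg (sub_nonneg.mpr (by exact_mod_cast (by omega))) hn.le
  have hfin : IsOfFinAddOrder h := isOfFinAddOrder_of_finite h
  obtain ⟨S, hS0, hSzero, hS⟩ := hA.exists_nsmul_eq_replicate_add hk hj
  obtain ⟨t, ht⟩ := hSzero.exists_mem_lengthSet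
  have ht0 := pos_of_mem_lengthSet hS0 ht
  have hcrossS : crossNum S = j * κ - 1 := by
    have := congrArg crossNum hS
    rw [crossNum_add, crossNum_replicate_addOrderOf hfin, crossNum_nsmul, hcross] at this
    linarith
  have htκ : t * κ ≤ crossNum S :=
    mul_le_crossNum_of_mem_lengthSet (fun V hV => hV.exponent_sub_div_exponent_le_crossNum hmin) ht
  have htj : 1 + t < j := by
    by_contra! hcon
    have : (j : ℝ) ≤ 1 + t := by exact_mod_cast hcon
    nlinarith [mul_le_mul_of_nonneg_right this hκ0]
  have hpow := isMinZeroSum_replicate_addOrderOf (hA.2.1 h hh) hfin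
  have h1t : 1 + t ∈ lengthSet G0 (j • A) := hS ▸ add_mem_lengthSet hpow.one_mem_lengthSet ht
  have := (hA.isZeroSumSeq.nsmul j).add_sInf_deltaG0_le h1t (hA.nsmul_mem_lengthSet j) htj
  omega

end CrossNumberOfAtoms

theorem stmt17_general {G : Type*} [AddCommGroup G] [Fintype G]
    (G0 : Set G)
    (hmin : AddMonoid.exponent G / 2 ≤ sInf (deltaG0 G0))
    (A : Multiset G) (hA : IsMinZeroSum G0 A) (hk : crossNum A < 1) :
    crossNum A = ((AddMonoid.exponent G : ℝ) - ((sInf (deltaG0 G0) : ℕ) : ℝ)) /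
        (AddMonoid.exponent G : ℝ) ∧
    ∀ h ∈ A, addOrderOf h = AddMonoid.exponent G ∧ A.count h = 1 := by
  refine ⟨(hA.crossNum_eq_of_crossNum_lt_one hmin hk).1, fun h hh => ?_⟩
  have hv : 1 ≤ A.count h := count_pos.mpr hh
  have hdvd : addOrderOf h ∣ AddMonoid.exponent G := AddMonoid.addOrder_dvd_exponent h
  by_contra hcon
  rcases eq_or_ne (addOrderOf h) (AddMonoid.exponent G) with hn | hn
  · have hv2 : 2 ≤ A.count h := by omega
    have := hA.sInf_deltaG0_add_two_le hmin hk hh (j := (AddMonoid.exponent G + 1) / 2)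
      (calc addOrderOf h ≤ (AddMonoid.exponent G + 1) / 2 * 2 := by omega
        _ ≤ _ := Nat.mul_le_mul_left _ hv2)
    omega
  · have h2 := Nat.two_mul_le_of_dvd_of_ne AddMonoid.exponent_ne_zero_of_finite hdvd hn
    have := hA.sInf_deltaG0_add_two_le hmin hk hh (Nat.le_mul_of_pos_right _ hv)
    omega

/-- Let `G` be a finite abelian group with `D(G) ≥ 4` and
`G₀ ⊆ G` with `Δ(G₀) ≠ ∅` and `min Δ(G₀) ≥ ⌊exp(G)/2⌋`. If `A ∈ 𝓐(G₀)`
has `k(A) < 1`, then `k(A) = (exp(G) − min Δ(G₀))/exp(G)`, and every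
`h ∈ supp(A)` satisfies `ord(h) = exp(G)` and `v_h(A) = 1`. -/
theorem stmt17 {G : Type*} [AddCommGroup G] [Fintype G]
    (hD : 4 ≤ davenport G)
    (G0 : Set G) (hne : deltaG0 G0 ≠ ∅)
    (hmin : AddMonoid.exponent G / 2 ≤ sInf (deltaG0 G0))
    (A : Multiset G) (hA : IsMinZeroSum G0 A) (hk : crossNum A < 1) :
    crossNum A = ((AddMonoid.exponent G : ℝ) - ((sInf (deltaG0 G0) : ℕ) : ℝ)) /
        (AddMonoid.exponent G : ℝ) ∧
    ∀ h ∈ A, addOrderOf h = AddMonoid.exponent G ∧ A.count h = 1 :=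
  stmt17_general G0 hmin A hA hk
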